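/- arXiv:1805.05861 — 2 statements merged into one kernel-verified Lean document; each statement's English description precedes it below -/
import Mathlib

section
/- For every r > 0: v″(r) = β r^{β−2} ( β−1 + (β̄−1) r^{pβ} ) / (1+r^{pβ})², and consequently β̄ − 1 ≤ r·v″(r)/v′(r) = ( β−1 + (β̄−1) r^{pβ} ) / (1+r^{pβ}) ≤ β − 1. -/
/-! For `r > 0`, the fundamental theorem of calculus and the chain rule give
`v'(r) = β r^(β-1) / (1 + r^(pβ))`; differentiating this quotient once more and using
`pβ = β - β̄` gives `v''`. The ratio `r v''/v'` is then the weighted mean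
`((β - 1) + (β̄ - 1) s) / (1 + s)` with weight `s = r^(pβ) ≥ 0`, so it lies between `β̄ - 1`
and `β - 1`. -/

open Filter Set Topology

noncomputable section

/-- The auxiliary function `v(r) = ∫₀^{r^β} (1 + τ^p)⁻¹ dτ`. -/
def auxv (β p : ℝ) (r : ℝ) : ℝ := ∫ τ in (0 : ℝ)..(r ^ β), (1 + τ ^ p)⁻¹

lemma one_add_rpow_pos {τ : ℝ} (hτ : 0 ≤ τ) (p : ℝ) : 0 < 1 + τ ^ p :=
  add_pos_of_pos_of_nonneg one_pos (Real.rpow_nonneg hτ p)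

lemma continuousOn_inv_one_add_rpow (p : ℝ) :
    ContinuousOn (fun τ : ℝ => (1 + τ ^ p)⁻¹) (Ioi 0) := fun τ hτ =>
  ((continuousAt_const.add (Real.continuousAt_rpow_const τ p (Or.inl hτ.ne'))).inv₀
    (one_add_rpow_pos hτ.le p).ne').continuousWithinAt

-- For `p < 0` the integrand is discontinuous at `0`, but it is bounded by `1` on `[0, ∞)`.
lemma intervalIntegrable_inv_one_add_rpow (p : ℝ) {b : ℝ} (hb : 0 ≤ b) :
    IntervalIntegrable (fun τ : ℝ => (1 + τ ^ p)⁻¹) MeasureTheory.volume 0 b := by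
  refine (intervalIntegrable_const (c := (1 : ℝ))).mono_fun ?_ ?_
  · refine ((continuousOn_inv_one_add_rpow p).mono ?_).aestronglyMeasurable measurableSet_uIoc
    rw [uIoc_of_le hb]
    exact Ioc_subset_Ioi_self
  · refine (MeasureTheory.ae_restrict_iff' measurableSet_uIoc).2 (Eventually.of_forall ?_)
    intro τ hτ
    rw [uIoc_of_le hb] at hτ
    change ‖(1 + τ ^ p)⁻¹‖ ≤ ‖(1 : ℝ)‖
    rw [norm_inv, norm_one, Real.norm_of_nonneg (one_add_rpow_pos hτ.1.le p).le]
    exact inv_le_one_of_one_le₀ (le_add_of_nonneg_right (Real.rpow_nonneg hτ.1.le p))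

lemma hasDerivAt_auxv (β p : ℝ) {r : ℝ} (hr : 0 < r) :
    HasDerivAt (auxv β p) (β * r ^ (β - 1) * (1 + r ^ (p * β))⁻¹) r := by
  have hrβ : 0 < r ^ β := Real.rpow_pos_of_pos hr β
  have hint : HasDerivAt (fun u : ℝ => ∫ τ in (0 : ℝ)..u, (1 + τ ^ p)⁻¹)
      (1 + (r ^ β) ^ p)⁻¹ (r ^ β) :=
    intervalIntegral.integral_hasDerivAt_right
      (intervalIntegrable_inv_one_add_rpow p hrβ.le)
      ((continuousOn_inv_one_add_rpow p).stronglyMeasurableAtFilter isOpen_Ioi _ hrβ)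
      ((continuousOn_inv_one_add_rpow p).continuousAt (Ioi_mem_nhds hrβ))
  have hcomp := hint.comp r (Real.hasDerivAt_rpow_const (p := β) (Or.inl hr.ne'))
  rw [← Real.rpow_mul hr.le, mul_comm β p] at hcomp
  exact hcomp.congr_deriv (by ring)

lemma hasDerivAt_rpow_mul_inv_one_add_rpow (a q : ℝ) {r : ℝ} (hr : 0 < r) :
    HasDerivAt (fun x : ℝ => x ^ a * (1 + x ^ q)⁻¹)
      (r ^ (a - 1) * ((a + (a - q) * r ^ q) / (1 + r ^ q) ^ 2)) r := by
  have hnum := Real.hasDerivAt_rpow_const (p := a) (Or.inl hr.ne')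
  have hden := (Real.hasDerivAt_rpow_const (p := q) (Or.inl hr.ne')).const_add 1
  have hpos := one_add_rpow_pos hr.le q
  refine (hnum.mul (hden.inv hpos.ne')).congr_deriv ?_
  simp only [Pi.inv_apply]
  rw [Real.rpow_sub_one hr.ne', Real.rpow_sub_one hr.ne']
  field_simp
  ring

lemma deriv_auxv_eventuallyEq (β p : ℝ) {r : ℝ} (hr : 0 < r) :
    deriv (auxv β p) =ᶠ[𝓝 r] fun x => β * (x ^ (β - 1) * (1 + x ^ (p * β))⁻¹) := by
  filter_upwards [eventually_gt_nhds hr] with x hx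
  rw [(hasDerivAt_auxv β p hx).deriv, mul_assoc]

lemma hasDerivAt_deriv_auxv (β p : ℝ) {r : ℝ} (hr : 0 < r) :
    HasDerivAt (deriv (auxv β p))
      (β * r ^ (β - 2) * ((β - 1 + (β - 1 - p * β) * r ^ (p * β)) / (1 + r ^ (p * β)) ^ 2)) r := by
  have h := ((hasDerivAt_rpow_mul_inv_one_add_rpow (β - 1) (p * β) hr).const_mul β
    ).congr_of_eventuallyEq (deriv_auxv_eventuallyEq β p hr)
  rwa [sub_sub, one_add_one_eq_two, ← mul_assoc] at h

lemma div_one_add_mem_Icc {a b s : ℝ} (hab : a ≤ b) (hs : 0 ≤ s) :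
    (b + a * s) / (1 + s) ∈ Icc a b := by
  have hs1 : 0 < 1 + s := by linarith
  constructor
  · rw [le_div_iff₀ hs1]
    linarith
  · rw [div_le_iff₀ hs1]
    nlinarith

theorem statement10 (βb β : ℝ) (hβb : 1 < βb) (hββ : βb < β)
    (p : ℝ) (hp : p = (β - βb) / β) :
    ∀ r : ℝ, 0 < r →
      HasDerivAt (deriv (auxv β p))
        (β * r ^ (β - 2) * ((β - 1 + (βb - 1) * r ^ (p * β)) / (1 + r ^ (p * β)) ^ 2)) r ∧
      r * (β * r ^ (β - 2) * ((β - 1 + (βb - 1) * r ^ (p * β)) / (1 + r ^ (p * β)) ^ 2))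
          / deriv (auxv β p) r
        = (β - 1 + (βb - 1) * r ^ (p * β)) / (1 + r ^ (p * β)) ∧
      βb - 1 ≤ (β - 1 + (βb - 1) * r ^ (p * β)) / (1 + r ^ (p * β)) ∧
      (β - 1 + (βb - 1) * r ^ (p * β)) / (1 + r ^ (p * β)) ≤ β - 1 := by
  intro r hr
  have hβ : 0 < β := by linarith
  have hexp : β - 1 - p * β = βb - 1 := by
    rw [hp, div_mul_cancel₀ _ hβ.ne']
    ring
  have hpow : r ^ (β - 1) = r ^ (β - 2) * r := by
    rw [← Real.rpow_add_one hr.ne']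
    ring_nf
  have hden := one_add_rpow_pos hr.le (p * β)
  have hmean := div_one_add_mem_Icc (by linarith : βb - 1 ≤ β - 1) (Real.rpow_nonneg hr.le (p * β))
  refine ⟨hexp ▸ hasDerivAt_deriv_auxv β p hr, ?_, hmean.1, hmean.2⟩
  have hrpow : 0 < r ^ (β - 2) := Real.rpow_pos_of_pos hr _
  rw [(hasDerivAt_auxv β p hr).deriv, hpow]
  field_simp

end
end

section
/- Assume H satisfies Conditions A and B. If sup_{λ>0} Λ_max(λ) < ∞, then max_{|e|=1} H(e, e⊗e) = 0. -/
open Filter Set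

noncomputable section

/-- The rank-one matrix `e ⊗ e` with entries `e i * e j`. -/
def outerProd {n : ℕ} (e : Fin n → ℝ) : Matrix (Fin n) (Fin n) ℝ := Matrix.vecMulVec e e

/-- `e` is a unit vector for the Euclidean norm. -/
def IsUnitVec {n : ℕ} (e : Fin n → ℝ) : Prop := ∑ i, e i ^ 2 = 1

/-- Condition A: monotonicity w.r.t. the Loewner order on symmetric matrices, and `H(q, O) = 0`. -/
def CondA {n : ℕ} (H : (Fin n → ℝ) → Matrix (Fin n) (Fin n) ℝ → ℝ) : Prop :=
  (∀ q X Y, X.IsSymm → Y.IsSymm → (Y - X).PosSemidef → H q X ≤ H q Y) ∧ ∀ q, H q 0 = 0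

/-- Condition B: homogeneity of degree `k₁` in the gradient entry and degree one in the matrix. -/
def CondB {n : ℕ} (H : (Fin n → ℝ) → Matrix (Fin n) (Fin n) ℝ → ℝ) (k₁ : ℝ) : Prop :=
  (∀ (θ : ℝ) (q : Fin n → ℝ) (X : Matrix (Fin n) (Fin n) ℝ), H (θ • q) X = |θ| ^ k₁ * H q X) ∧
  (∀ (θ : ℝ), 0 < θ → ∀ (q : Fin n → ℝ) (X : Matrix (Fin n) (Fin n) ℝ), H q (θ • X) = θ * H q X)


/-- `Λ_max(λ) = max_{|e| = 1} H(e, λ e⊗e + I)`. -/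
def LamMax {n : ℕ} (H : (Fin n → ℝ) → Matrix (Fin n) (Fin n) ℝ → ℝ) (lam : ℝ) : ℝ :=
  sSup {y | ∃ e, IsUnitVec e ∧ H e (lam • outerProd e + 1) = y}

/-! By monotonicity `H(e, e⊗e) ≥ H(e, O) = 0`. Conversely, by monotonicity and
homogeneity `λ H(e, e⊗e) = H(e, λ e⊗e) ≤ H(e, λ e⊗e + I) ≤ Λ_max(λ)`, which stays bounded as
`λ → ∞`; hence `H(e, e⊗e) ≤ 0`. Continuity of `H` and compactness of the sphere make `Λ_max(λ)`
a genuine maximum rather than a junk `sSup`. -/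

section

variable {n : ℕ}

lemma outerProd_posSemidef (e : Fin n → ℝ) : (outerProd e).PosSemidef :=
  Matrix.posSemidef_vecMulVec_self_star e

lemma outerProd_isSymm (e : Fin n → ℝ) : (outerProd e).IsSymm :=
  Matrix.isHermitian_iff_isSymm.mp (outerProd_posSemidef e).isHermitian

lemma isCompact_setOf_isUnitVec : IsCompact {e : Fin n → ℝ | IsUnitVec e} := by
  refine (isCompact_univ_pi fun _ => isCompact_Icc (a := (-1 : ℝ)) (b := 1)).of_isClosed_subset
    (isClosed_eq (by fun_prop) continuous_const) fun e he i _ => abs_le.mp ?_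
  rw [← sq_le_one_iff_abs_le_one, ← he]
  exact Finset.single_le_sum (fun j _ => sq_nonneg (e j)) (Finset.mem_univ i)

lemma exists_isUnitVec (hn : 0 < n) : ∃ e : Fin n → ℝ, IsUnitVec e :=
  ⟨Pi.single ⟨0, hn⟩ 1, by simp [IsUnitVec, Pi.single_apply]⟩

variable {H : (Fin n → ℝ) → Matrix (Fin n) (Fin n) ℝ → ℝ}

namespace CondA

variable (hA : CondA H)
include hA

lemma nonneg_of_posSemidef {q : Fin n → ℝ} {X : Matrix (Fin n) (Fin n) ℝ}
    (hX : X.PosSemidef) : 0 ≤ H q X := by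
  simpa [hA.2 q] using hA.1 q 0 X Matrix.isSymm_zero
    (Matrix.isHermitian_iff_isSymm.mp hX.isHermitian) (by simpa using hX)

lemma le_add_one (q : Fin n → ℝ) {X : Matrix (Fin n) (Fin n) ℝ} (hX : X.IsSymm) :
    H q X ≤ H q (X + 1) :=
  hA.1 q X (X + 1) hX (hX.add Matrix.isSymm_one) (by simpa using Matrix.PosSemidef.one)

end CondA

lemma le_lamMax (hcont : Continuous (Function.uncurry H)) (lam : ℝ) {e : Fin n → ℝ}
    (he : IsUnitVec e) : H e (lam • outerProd e + 1) ≤ LamMax H lam := by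
  have hcont' : Continuous fun e : Fin n → ℝ => H e (lam • outerProd e + 1) := by
    unfold outerProd
    exact hcont.comp (continuous_id.prodMk (by fun_prop))
  exact le_csSup (isCompact_setOf_isUnitVec.image hcont').bddAbove ⟨e, he, rfl⟩

lemma apply_outerProd_nonpos (hcont : Continuous (Function.uncurry H)) (hA : CondA H)
    {k₁ : ℝ} (hB : CondB H k₁) {M : ℝ} (hM : ∀ lam > 0, LamMax H lam ≤ M) {e : Fin n → ℝ}
    (he : IsUnitVec e) : H e (outerProd e) ≤ 0 := by
  have hbound : ∀ lam > 0, lam * H e (outerProd e) ≤ M := fun lam hlam =>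
    calc lam * H e (outerProd e) = H e (lam • outerProd e) := (hB.2 lam hlam e _).symm
      _ ≤ H e (lam • outerProd e + 1) := hA.le_add_one e ((outerProd_isSymm e).smul lam)
      _ ≤ LamMax H lam := le_lamMax hcont lam he
      _ ≤ M := hM lam hlam
  by_contra! hpos
  have hlam : 0 < (|M| + 1) / H e (outerProd e) := by positivity
  have := hbound _ hlam
  rw [div_mul_cancel₀ _ hpos.ne'] at this
  linarith [le_abs_self M]

end

theorem statement14_general {n : ℕ} (hn : 2 ≤ n)
    (H : (Fin n → ℝ) → Matrix (Fin n) (Fin n) ℝ → ℝ)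
    (hcont : Continuous (Function.uncurry H))
    (hA : CondA H) (k₁ : ℝ) (hB : CondB H k₁)
    (hbdd : BddAbove (LamMax H '' Set.Ioi 0)) :
    sSup {y | ∃ e, IsUnitVec e ∧ H e (outerProd e) = y} = 0 := by
  obtain ⟨M, hM⟩ := hbdd
  have hzero : ∀ e, IsUnitVec e → H e (outerProd e) = 0 := fun e he =>
    (apply_outerProd_nonpos hcont hA hB (fun lam hlam => hM ⟨lam, hlam, rfl⟩) he).antisymm
      (hA.nonneg_of_posSemidef (outerProd_posSemidef e))
  obtain ⟨e₀, he₀⟩ := exists_isUnitVec (n := n) (by omega)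
  have hset : {y | ∃ e, IsUnitVec e ∧ H e (outerProd e) = y} = {0} :=
    Set.eq_singleton_iff_unique_mem.mpr
      ⟨⟨e₀, he₀, hzero e₀ he₀⟩, by rintro _ ⟨e, he, rfl⟩; exact hzero e he⟩
  rw [hset, csSup_singleton]

theorem statement14 {n : ℕ} (hn : 2 ≤ n)
    (H : (Fin n → ℝ) → Matrix (Fin n) (Fin n) ℝ → ℝ)
    (hcont : Continuous (Function.uncurry H))
    (hA : CondA H) (k₁ : ℝ) (hk₁ : 0 ≤ k₁) (hB : CondB H k₁)
    (hbdd : BddAbove (LamMax H '' Set.Ioi 0)) :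
    sSup {y | ∃ e, IsUnitVec e ∧ H e (outerProd e) = y} = 0 :=
  statement14_general hn H hcont hA k₁ hB hbdd
end
end
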